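/- Let ω > 0 be a faithful state (density matrix) on a finite dimensional Hilbert space with Hamiltonian H, ω_t = e^{−itH} ω e^{itH}, and e_t(s) = log Tr(ω_t^s ω^{1−s}). Then e_{−t}(s) = e_t(1−s) for all s, t ∈ ℝ. Moreover, if there is an antiunitary involution θ commuting with both H and ω (time-reversal invariance), then e_t(s) = e_t(1−s). -/

import Mathlib

open scoped ComplexOrder

attribute [local instance] Matrix.linftyOpNormedAddCommGroup Matrix.linftyOpNormedRing
  Matrix.linftyOpNormedAlgebra

/-- Functional calculus for Hermitian matrices (junk value `0` off the Hermitian matrices). -/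
noncomputable def cfcM {d : ℕ} (f : ℝ → ℝ) (A : Matrix (Fin d) (Fin d) ℂ) :
    Matrix (Fin d) (Fin d) ℂ :=
  if h : A.IsHermitian then
    (h.eigenvectorUnitary : Matrix (Fin d) (Fin d) ℂ) *
      Matrix.diagonal (fun i => (f (h.eigenvalues i) : ℂ)) *
      (star (h.eigenvectorUnitary : Matrix (Fin d) (Fin d) ℂ))
  else 0

/-- Real power of a (positive) Hermitian matrix via functional calculus. -/
noncomputable def mpow {d : ℕ} (A : Matrix (Fin d) (Fin d) ℂ) (s : ℝ) :
    Matrix (Fin d) (Fin d) ℂ := cfcM (fun x => x ^ s) A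

/-- Heisenberg evolution of the state `ω`: `ω_t = e^{−itH} ω e^{itH}`. -/
noncomputable def stateAt {d : ℕ} (H ω : Matrix (Fin d) (Fin d) ℂ) (t : ℝ) :
    Matrix (Fin d) (Fin d) ℂ :=
  NormedSpace.exp ((-(Complex.I * t)) • H) * ω * NormedSpace.exp ((Complex.I * t) • H)

/-- Rényi entropic functional `e_t(s) = log Tr(ω_t^s ω^{1−s})`. -/
noncomputable def renyiFun {d : ℕ} (H ω : Matrix (Fin d) (Fin d) ℂ) (t s : ℝ) : ℝ :=
  Real.log (((mpow (stateAt H ω t) s * mpow ω (1 - s)).trace).re)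

/-!
Real ⋆-algebra endomorphisms `φ` of `Mat_d(ℂ)` commute with the functional calculus, so
`φ (A ^ s * B ^ r) = (φ A) ^ s * (φ B) ^ r` for Hermitian `A`, `B`. For the first identity take
`φ = Ad (e^{itH})`: it preserves traces, sends `ω_t` to `ω` and `ω` to `ω_{-t}`, so
`e_{-t}(s) = log Tr (ω ^ s ω_t ^ (1 - s)) = e_t(1 - s)` by cyclicity of the trace.
For the second, an antiunitary `θ v = V v̄` gives the real ⋆-homomorphism `A ↦ V Ā V*`, which
conjugates the trace, fixes `H` and `ω`, and reverses time: it sends `ω_t` to `ω_{-t}`. Hence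
`e_{-t}(s) = e_t(s)`, and the first identity finishes the proof.
-/

open NormedSpace Unitary

section Matrices

variable {n : Type*} [Fintype n] [DecidableEq n]

lemma Matrix.continuous_of_algHomClass {F : Type*} [FunLike F (Matrix n n ℂ) (Matrix n n ℂ)]
    [AlgHomClass F ℝ (Matrix n n ℂ) (Matrix n n ℂ)] (φ : F) : Continuous φ :=
  LinearMap.continuous_of_finiteDimensional
    (AlgHomClass.toAlgHom φ : Matrix n n ℂ →ₐ[ℝ] Matrix n n ℂ).toLinearMap

lemma Matrix.exp_mem_unitary_of_star_eq_neg {A : Matrix n n ℂ} (hA : star A = -A) :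
    exp A ∈ unitary (Matrix n n ℂ) := by
  rw [Unitary.mem_iff, star_exp, hA, ← Matrix.exp_add_of_commute _ _ (Commute.refl A).neg_left,
    ← Matrix.exp_add_of_commute _ _ (Commute.refl A).neg_right, neg_add_cancel, add_neg_cancel,
    exp_zero, and_self]

lemma Matrix.trace_conjStarAlgAut (u : unitary (Matrix n n ℂ)) (M : Matrix n n ℂ) :
    (conjStarAlgAut ℝ _ u M).trace = M.trace := by
  rw [conjStarAlgAut_apply, Matrix.trace_mul_cycle, Unitary.star_mul_self_of_mem u.2, one_mul]

noncomputable def entrywiseConj : Matrix n n ℂ →⋆ₐ[ℝ] Matrix n n ℂ :=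
  { Complex.conjAe.toAlgHom.mapMatrix with
    map_star' := fun M => by ext i j; simp [Matrix.star_apply] }

lemma entrywiseConj_apply (M : Matrix n n ℂ) : entrywiseConj M = M.map (starRingEnd ℂ) := rfl

lemma entrywiseConj_smul (c : ℂ) (M : Matrix n n ℂ) :
    entrywiseConj (c • M) = starRingEnd ℂ c • entrywiseConj M := by
  ext i j; simp [entrywiseConj_apply]

lemma trace_entrywiseConj (M : Matrix n n ℂ) :
    (entrywiseConj M).trace = starRingEnd ℂ M.trace := by
  simp [entrywiseConj_apply, Matrix.trace, map_sum]

/-- `A ↦ θ A θ⁻¹` for the antiunitary `θ v = V v̄`. -/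
noncomputable def timeReversal (V : unitary (Matrix n n ℂ)) : Matrix n n ℂ →⋆ₐ[ℝ] Matrix n n ℂ :=
  (conjStarAlgAut ℝ _ V : Matrix n n ℂ →⋆ₐ[ℝ] Matrix n n ℂ).comp entrywiseConj

lemma timeReversal_apply (V : unitary (Matrix n n ℂ)) (M : Matrix n n ℂ) :
    timeReversal V M = V * M.map (starRingEnd ℂ) * star (V : Matrix n n ℂ) := rfl

lemma timeReversal_smul (V : unitary (Matrix n n ℂ)) (c : ℂ) (M : Matrix n n ℂ) :
    timeReversal V (c • M) = starRingEnd ℂ c • timeReversal V M := by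
  simp only [timeReversal_apply, ← entrywiseConj_apply, entrywiseConj_smul, mul_smul_comm,
    smul_mul_assoc]

lemma trace_timeReversal (V : unitary (Matrix n n ℂ)) (M : Matrix n n ℂ) :
    (timeReversal V M).trace = starRingEnd ℂ M.trace := by
  rw [timeReversal_apply, Matrix.trace_mul_cycle, Unitary.star_mul_self_of_mem V.2, one_mul,
    ← entrywiseConj_apply, trace_entrywiseConj]

lemma timeReversal_eq_self (V : unitary (Matrix n n ℂ)) {M : Matrix n n ℂ}
    (hM : V * M.map (starRingEnd ℂ) = M * V) : timeReversal V M = M := by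
  rw [timeReversal_apply, hM, mul_assoc, Unitary.mul_star_self_of_mem V.2, mul_one]

end Matrices

section FunctionalCalculus

variable {d : ℕ}

lemma cfcM_eq_cfc {A : Matrix (Fin d) (Fin d) ℂ} (hA : A.IsHermitian) (f : ℝ → ℝ) :
    cfcM f A = cfc f A := by
  rw [hA.cfc_eq, cfcM, dif_pos hA]; rfl

variable {F : Type*} [FunLike F (Matrix (Fin d) (Fin d) ℂ) (Matrix (Fin d) (Fin d) ℂ)]
  [AlgHomClass F ℝ (Matrix (Fin d) (Fin d) ℂ) (Matrix (Fin d) (Fin d) ℂ)]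
  [StarHomClass F (Matrix (Fin d) (Fin d) ℂ) (Matrix (Fin d) (Fin d) ℂ)]

lemma cfcM_map (φ : F) {A : Matrix (Fin d) (Fin d) ℂ} (hA : A.IsHermitian) (f : ℝ → ℝ) :
    cfcM f (φ A) = φ (cfcM f A) := by
  have hφA : (φ A).IsHermitian := hA.isSelfAdjoint.map φ
  rw [cfcM_eq_cfc hA, cfcM_eq_cfc hφA]
  refine (StarAlgHomClass.map_cfc (S := ℝ) φ f A ?_ ?_ hA hφA).symm
  · exact continuousOn_iff_continuous_domRestrict.mpr (by fun_prop)
  · exact Matrix.continuous_of_algHomClass φ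

lemma mpow_mul_mpow_map (φ : F) {A B : Matrix (Fin d) (Fin d) ℂ} (hA : A.IsHermitian)
    (hB : B.IsHermitian) (s r : ℝ) :
    mpow (φ A) s * mpow (φ B) r = φ (mpow A s * mpow B r) := by
  rw [mpow, mpow, cfcM_map φ hA, cfcM_map φ hB, map_mul]; rfl

end FunctionalCalculus

section Dynamics

variable {d : ℕ} {H : Matrix (Fin d) (Fin d) ℂ}

noncomputable def propagator (hH : H.IsHermitian) (t : ℝ) : unitary (Matrix (Fin d) (Fin d) ℂ) :=
  ⟨exp ((-(Complex.I * t)) • H), Matrix.exp_mem_unitary_of_star_eq_neg <| by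
    rw [star_smul, hH.isSelfAdjoint.star_eq, ← neg_smul]; simp [Complex.conj_ofReal]⟩

lemma star_propagator (hH : H.IsHermitian) (t : ℝ) :
    ((star (propagator hH t) : unitary _) : Matrix (Fin d) (Fin d) ℂ) =
      exp ((Complex.I * t) • H) := by
  rw [Unitary.coe_star, propagator, star_exp, star_smul, hH.isSelfAdjoint.star_eq]
  simp [Complex.conj_ofReal]

lemma stateAt_eq_conjStarAlgAut (hH : H.IsHermitian) (ω : Matrix (Fin d) (Fin d) ℂ) (t : ℝ) :
    stateAt H ω t = conjStarAlgAut ℝ _ (propagator hH t) ω := by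
  rw [conjStarAlgAut_apply, ← Unitary.coe_star, star_propagator]; rfl

lemma stateAt_neg_eq_conjStarAlgAut (hH : H.IsHermitian) (ω : Matrix (Fin d) (Fin d) ℂ)
    (t : ℝ) : stateAt H ω (-t) = conjStarAlgAut ℝ _ (star (propagator hH t)) ω := by
  rw [conjStarAlgAut_apply, ← Unitary.coe_star, star_star, star_propagator, propagator, stateAt]
  push_cast
  simp only [mul_neg, neg_neg]

lemma stateAt_isHermitian (hH : H.IsHermitian) {ω : Matrix (Fin d) (Fin d) ℂ}
    (hω : ω.IsHermitian) (t : ℝ) : (stateAt H ω t).IsHermitian := by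
  rw [stateAt_eq_conjStarAlgAut hH]
  exact hω.isSelfAdjoint.map _

lemma timeReversal_stateAt (V : unitary (Matrix (Fin d) (Fin d) ℂ))
    (ω : Matrix (Fin d) (Fin d) ℂ) (t : ℝ) :
    timeReversal V (stateAt H ω t) = stateAt (timeReversal V H) (timeReversal V ω) (-t) := by
  have hexp (c : ℂ) :
      timeReversal V (exp (c • H)) = exp (starRingEnd ℂ c • timeReversal V H) := by
    rw [← timeReversal_smul]
    exact map_exp (timeReversal V) (Matrix.continuous_of_algHomClass (timeReversal V)) _
  rw [stateAt, map_mul, map_mul, hexp, hexp, stateAt]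
  congr 3 <;> simp [Complex.conj_ofReal]

end Dynamics

section Renyi

variable {d : ℕ} {H ω : Matrix (Fin d) (Fin d) ℂ}

lemma renyiFun_neg (hH : H.IsHermitian) (hω : ω.IsHermitian) (t s : ℝ) :
    renyiFun H ω (-t) s = renyiFun H ω t (1 - s) := by
  set Φ := conjStarAlgAut ℝ (Matrix (Fin d) (Fin d) ℂ) (star (propagator hH t))
  have hΦω : Φ ω = stateAt H ω (-t) := (stateAt_neg_eq_conjStarAlgAut hH ω t).symm
  have hΦωt : Φ (stateAt H ω t) = ω := by
    rw [stateAt_eq_conjStarAlgAut hH, ← conjStarAlgAut_mul_apply, star_mul_self, map_one]; rfl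
  have key : mpow (stateAt H ω (-t)) s * mpow ω (1 - s) =
      Φ (mpow ω s * mpow (stateAt H ω t) (1 - s)) := by
    rw [← mpow_mul_mpow_map Φ hω (stateAt_isHermitian hH hω t), hΦω, hΦωt]
  rw [renyiFun, renyiFun, key, Matrix.trace_conjStarAlgAut, Matrix.trace_mul_comm,
    sub_sub_cancel]

lemma renyiFun_neg_eq_of_timeReversal (hH : H.IsHermitian) (hω : ω.IsHermitian)
    (V : unitary (Matrix (Fin d) (Fin d) ℂ)) (hVH : timeReversal V H = H)
    (hVω : timeReversal V ω = ω) (t s : ℝ) :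
    renyiFun H ω (-t) s = renyiFun H ω t s := by
  have key : mpow (stateAt H ω (-t)) s * mpow ω (1 - s) =
      timeReversal V (mpow (stateAt H ω t) s * mpow ω (1 - s)) := by
    rw [← mpow_mul_mpow_map _ (stateAt_isHermitian hH hω t) hω, timeReversal_stateAt, hVH, hVω]
  rw [renyiFun, renyiFun, key, trace_timeReversal, Complex.conj_re]

end Renyi

theorem renyi_evans_searles_general {d : ℕ}
    (H ω : Matrix (Fin d) (Fin d) ℂ) (hH : H.IsHermitian)
    (hω : ω.PosDef) :
    (∀ t s : ℝ, renyiFun H ω (-t) s = renyiFun H ω t (1 - s)) ∧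
    ((∃ V : Matrix (Fin d) (Fin d) ℂ,
        V * star V = 1 ∧
        V * V.map (starRingEnd ℂ) = 1 ∧
        V * H.map (starRingEnd ℂ) = H * V ∧
        V * ω.map (starRingEnd ℂ) = ω * V) →
      ∀ t s : ℝ, renyiFun H ω t s = renyiFun H ω t (1 - s)) := by
  refine ⟨renyiFun_neg hH hω.isHermitian, ?_⟩
  rintro ⟨V, hV, -, hVH, hVω⟩ t s
  let θ : unitary (Matrix (Fin d) (Fin d) ℂ) :=
    ⟨V, Unitary.mem_iff.mpr ⟨mul_eq_one_comm.mp hV, hV⟩⟩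
  rw [← renyiFun_neg_eq_of_timeReversal hH hω.isHermitian θ (timeReversal_eq_self θ hVH)
    (timeReversal_eq_self θ hVω), renyiFun_neg hH hω.isHermitian]

/-- `e_{−t}(s) = e_t(1−s)`; and under time-reversal invariance (an antiunitary involution
`v ↦ V conj v` commuting with `H` and `ω`) the Evans–Searles symmetry `e_t(s) = e_t(1−s)`. -/
theorem renyi_evans_searles {d : ℕ}
    (H ω : Matrix (Fin d) (Fin d) ℂ) (hH : H.IsHermitian)
    (hω : ω.PosDef) (htr : ω.trace = 1) :
    (∀ t s : ℝ, renyiFun H ω (-t) s = renyiFun H ω t (1 - s)) ∧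
    ((∃ V : Matrix (Fin d) (Fin d) ℂ,
        V * star V = 1 ∧
        V * V.map (starRingEnd ℂ) = 1 ∧
        V * H.map (starRingEnd ℂ) = H * V ∧
        V * ω.map (starRingEnd ℂ) = ω * V) →
      ∀ t s : ℝ, renyiFun H ω t s = renyiFun H ω t (1 - s)) :=
  renyi_evans_searles_general H ω hH hω
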